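/- Let a_1,…,a_m be positive integers with Σ_{i=1}^m a_i = 2σ for a positive integer σ. Consider the single-processor caching instance with V = {v_1,…,v_m, v'}, weights μ(v_i) = a_i and μ(v') = σ, capacity r = 2σ, and required sets R_1 = {v_1,…,v_m}, R_2 = {v'}, R_3 = {v_1,…,v_m}. Then the minimum loading cost over all feasible cache traces equals 5σ − s*, where s* = max{ Σ_{i∈S} a_i : S ⊆ [m], Σ_{i∈S} a_i ≤ σ }. In particular, the minimum loading cost equals 4σ if and only if some subset of {a_1,…,a_m} sums to exactly σ, and otherwise it is strictly greater than 4σ. -/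

import Mathlib

/-!
Every feasible trace must have loaded all of `V`, of total weight `3σ`, by the end of step 2, and
the loads of steps 1 and 2 are exactly `μ(C₁ ∪ C₂)`, so these steps cost exactly `3σ`. When `v'`
is in cache at step 2, the `v_i` kept alongside it form a subset `T` with `Σ_{i∈T} a_i ≤ σ`, so step
3 reloads at least `2σ − Σ_{i∈T} a_i ≥ 2σ − s*`. Keeping an optimal subset attains this bound.
-/

open Finset

section SubsetSum

variable {ι : Type*} [Fintype ι] (a : ι → ℕ) (σ : ℕ)

def maxSubsetSumLE : ℕ :=
  ((univ : Finset ι).powerset.filter fun S => ∑ i ∈ S, a i ≤ σ).sup fun S => ∑ i ∈ S, a i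

theorem maxSubsetSumLE_le : maxSubsetSumLE a σ ≤ σ :=
  Finset.sup_le fun _ hS => (mem_filter.1 hS).2

theorem exists_sum_eq_maxSubsetSumLE : ∃ S : Finset ι, ∑ i ∈ S, a i = maxSubsetSumLE a σ := by
  obtain ⟨S, -, hS⟩ :=
    exists_mem_eq_sup ((univ : Finset ι).powerset.filter fun S => ∑ i ∈ S, a i ≤ σ)
      ⟨∅, by simp⟩ fun S => ∑ i ∈ S, a i
  exact ⟨S, hS.symm⟩

variable {a σ} in
theorem sum_le_maxSubsetSumLE {S : Finset ι} (hS : ∑ i ∈ S, a i ≤ σ) :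
    ∑ i ∈ S, a i ≤ maxSubsetSumLE a σ :=
  le_sup (f := fun S => ∑ i ∈ S, a i) (mem_filter.2 ⟨mem_powerset.2 (subset_univ S), hS⟩)

theorem maxSubsetSumLE_eq_self_iff :
    maxSubsetSumLE a σ = σ ↔ ∃ S : Finset ι, ∑ i ∈ S, a i = σ := by
  constructor
  · intro h
    obtain ⟨S, hS⟩ := exists_sum_eq_maxSubsetSumLE a σ
    exact ⟨S, hS.trans h⟩
  · rintro ⟨S, hS⟩
    exact (maxSubsetSumLE_le a σ).antisymm (hS.ge.trans (sum_le_maxSubsetSumLE hS.le))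

end SubsetSum

theorem Finset.sum_add_sum_sdiff {α M : Type*} [DecidableEq α] [AddCommMonoid M] (f : α → M)
    (s t : Finset α) : ∑ x ∈ s, f x + ∑ x ∈ t \ s, f x = ∑ x ∈ s ∪ t, f x := by
  rw [← sum_union disjoint_sdiff, union_sdiff_self_eq_union]

section Cache

variable {ι : Type*}

def cacheWeight (a : ι → ℕ) (σ : ℕ) : Option ι → ℝ
  | none => σ
  | some i => a i

def IsFeasibleTrace (a : ι → ℕ) (σ : ℕ) (C : Fin 4 → Finset (Option ι)) : Prop :=
  C 0 = ∅ ∧ (∀ j, ∑ v ∈ C j, cacheWeight a σ v ≤ 2 * (σ : ℝ)) ∧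
    (∀ i, some i ∈ C 1) ∧ none ∈ C 2 ∧ ∀ i, some i ∈ C 3

def loadingCost [DecidableEq ι] (a : ι → ℕ) (σ : ℕ) (C : Fin 4 → Finset (Option ι)) : ℝ :=
  ∑ v ∈ C 1 \ C 0, cacheWeight a σ v + ∑ v ∈ C 2 \ C 1, cacheWeight a σ v +
    ∑ v ∈ C 3 \ C 2, cacheWeight a σ v

def keepTrace [Fintype ι] (S : Finset ι) : Fin 4 → Finset (Option ι) :=
  ![∅, univ.map .some, insertNone S, univ.map .some]

variable {a : ι → ℕ} {σ : ℕ}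

theorem cacheWeight_nonneg (v : Option ι) : 0 ≤ cacheWeight a σ v := by
  cases v <;> simp [cacheWeight]

theorem sum_cacheWeight_insertNone (S : Finset ι) :
    ∑ v ∈ insertNone S, cacheWeight a σ v = σ + ∑ i ∈ S, (a i : ℝ) :=
  sum_insertNone _ _

theorem sum_cacheWeight_map_some (S : Finset ι) :
    ∑ v ∈ S.map .some, cacheWeight a σ v = ∑ i ∈ S, (a i : ℝ) :=
  sum_map _ _ _

variable [Fintype ι]

theorem sum_cacheWeight_univ (hsum : ∑ i, a i = 2 * σ) :
    ∑ v, cacheWeight a σ v = 3 * σ := by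
  simp only [Fintype.sum_option, cacheWeight]
  rw [← Nat.cast_sum, hsum]
  push_cast
  ring

theorem isFeasibleTrace_keepTrace (hsum : ∑ i, a i = 2 * σ) {S : Finset ι}
    (hS : ∑ i ∈ S, a i ≤ σ) : IsFeasibleTrace a σ (keepTrace S) := by
  have hall : ∑ v ∈ univ.map .some, cacheWeight a σ v = 2 * σ := by
    rw [sum_cacheWeight_map_some]; exact_mod_cast hsum
  refine ⟨rfl, fun j => ?_, fun i => ?_, ?_, fun i => ?_⟩
  · fin_cases j
    · simp [keepTrace]
    · exact hall.le
    · change ∑ v ∈ insertNone S, cacheWeight a σ v ≤ 2 * σ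
      have hSℝ : ∑ i ∈ S, (a i : ℝ) ≤ σ := by exact_mod_cast hS
      rw [sum_cacheWeight_insertNone]
      linarith
    · exact hall.le
  all_goals simp [keepTrace]

variable [DecidableEq ι]

theorem sum_compl_eq_two_mul_sub_sum (hsum : ∑ i, a i = 2 * σ) (S : Finset ι) :
    ∑ i ∈ Sᶜ, (a i : ℝ) = 2 * σ - ∑ i ∈ S, (a i : ℝ) := by
  have hsumℝ : ∑ i, (a i : ℝ) = 2 * σ := by exact_mod_cast hsum
  rw [← hsumℝ, ← sum_compl_add_sum S]
  ring

theorem loadingCost_eq_of_union_eq_univ {C : Fin 4 → Finset (Option ι)} (hsum : ∑ i, a i = 2 * σ)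
    (h0 : C 0 = ∅) (h12 : C 1 ∪ C 2 = univ) :
    loadingCost a σ C = 3 * σ + ∑ v ∈ C 3 \ C 2, cacheWeight a σ v := by
  rw [loadingCost, h0, sdiff_empty, sum_add_sum_sdiff, h12, sum_cacheWeight_univ hsum]

theorem sub_maxSubsetSumLE_le_sum_sdiff (hsum : ∑ i, a i = 2 * σ) {C₂ C₃ : Finset (Option ι)}
    (hcap : ∑ v ∈ C₂, cacheWeight a σ v ≤ 2 * σ) (hnone : none ∈ C₂) (hC₃ : ∀ i, some i ∈ C₃) :
    2 * σ - (maxSubsetSumLE a σ : ℝ) ≤ ∑ v ∈ C₃ \ C₂, cacheWeight a σ v := by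
  set T := eraseNone C₂
  have hT : ∑ i ∈ T, a i ≤ σ := by
    have hC₂ : ∑ v ∈ C₂, cacheWeight a σ v = σ + ∑ i ∈ T, (a i : ℝ) := by
      rw [← sum_cacheWeight_insertNone, insertNone_eraseNone, insert_eq_of_mem hnone]
    exact_mod_cast (by linarith : ∑ i ∈ T, (a i : ℝ) ≤ σ)
  have hsub : Tᶜ.map .some ⊆ C₃ \ C₂ := by
    intro v hv
    obtain ⟨i, hi, rfl⟩ := mem_map.1 hv
    exact mem_sdiff.2 ⟨hC₃ i, by simpa [T] using hi⟩
  calc 2 * σ - (maxSubsetSumLE a σ : ℝ) ≤ 2 * σ - ∑ i ∈ T, (a i : ℝ) := by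
        gcongr; exact_mod_cast sum_le_maxSubsetSumLE hT
    _ = ∑ i ∈ Tᶜ, (a i : ℝ) := (sum_compl_eq_two_mul_sub_sum hsum T).symm
    _ = ∑ v ∈ Tᶜ.map .some, cacheWeight a σ v := (sum_cacheWeight_map_some _).symm
    _ ≤ ∑ v ∈ C₃ \ C₂, cacheWeight a σ v :=
        sum_le_sum_of_subset_of_nonneg hsub fun v _ _ => cacheWeight_nonneg v

theorem IsFeasibleTrace.union_eq_univ {C : Fin 4 → Finset (Option ι)}
    (hC : IsFeasibleTrace a σ C) : C 1 ∪ C 2 = univ := by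
  obtain ⟨-, -, h1, h2, -⟩ := hC
  ext (_ | i) <;> simp [h1, h2]

theorem IsFeasibleTrace.le_loadingCost (hsum : ∑ i, a i = 2 * σ) {C : Fin 4 → Finset (Option ι)}
    (hC : IsFeasibleTrace a σ C) : 5 * σ - (maxSubsetSumLE a σ : ℝ) ≤ loadingCost a σ C := by
  have h3 := sub_maxSubsetSumLE_le_sum_sdiff hsum (hC.2.1 2) hC.2.2.2.1 hC.2.2.2.2
  rw [loadingCost_eq_of_union_eq_univ hsum hC.1 hC.union_eq_univ]
  linarith

theorem loadingCost_keepTrace (hsum : ∑ i, a i = 2 * σ) (S : Finset ι) :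
    loadingCost a σ (keepTrace S) = 5 * σ - ∑ i ∈ S, (a i : ℝ) := by
  have hdiff : univ.map .some \ insertNone S = Sᶜ.map .some := by
    ext (_ | i) <;> simp
  rw [loadingCost_eq_of_union_eq_univ hsum rfl (by ext (_ | i) <;> simp [keepTrace])]
  change 3 * σ + ∑ v ∈ univ.map .some \ insertNone S, cacheWeight a σ v = _
  rw [hdiff, sum_cacheWeight_map_some, sum_compl_eq_two_mul_sub_sum hsum]
  ring

theorem isLeast_loadingCost (hsum : ∑ i, a i = 2 * σ) :
    IsLeast {c | ∃ C, IsFeasibleTrace a σ C ∧ loadingCost a σ C = c}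
      (5 * σ - (maxSubsetSumLE a σ : ℝ)) := by
  obtain ⟨S, hS⟩ := exists_sum_eq_maxSubsetSumLE a σ
  refine ⟨⟨keepTrace S, isFeasibleTrace_keepTrace hsum (hS ▸ maxSubsetSumLE_le a σ), ?_⟩, ?_⟩
  · rw [loadingCost_keepTrace hsum, ← hS, Nat.cast_sum]
  · rintro _ ⟨C, hC, rfl⟩
    exact hC.le_loadingCost hsum

end Cache

theorem statement_4 (m : ℕ) (a : Fin m → ℕ)
    (σ : ℕ) (hsum : ∑ i, a i = 2 * σ) :
    let μ : Option (Fin m) → ℝ := fun v => match v with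
      | none => (σ : ℝ)
      | some i => (a i : ℝ)
    let feasible : (Fin 4 → Finset (Option (Fin m))) → Prop := fun C =>
      C 0 = ∅ ∧
      (∀ j : Fin 4, ∑ v ∈ C j, μ v ≤ 2 * (σ : ℝ)) ∧
      (∀ i, some i ∈ C 1) ∧ (none ∈ C 2) ∧ (∀ i, some i ∈ C 3)
    let cost : (Fin 4 → Finset (Option (Fin m))) → ℝ := fun C =>
      ∑ v ∈ C 1 \ C 0, μ v + ∑ v ∈ C 2 \ C 1, μ v + ∑ v ∈ C 3 \ C 2, μ v
    let sStar : ℕ :=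
      (Finset.univ.powerset.filter (fun S : Finset (Fin m) => ∑ i ∈ S, a i ≤ σ)).sup
        (fun S => ∑ i ∈ S, a i)
    sInf {c : ℝ | ∃ C, feasible C ∧ cost C = c} = 5 * (σ : ℝ) - (sStar : ℝ) ∧
    (sInf {c : ℝ | ∃ C, feasible C ∧ cost C = c} = 4 * (σ : ℝ) ↔
      ∃ S : Finset (Fin m), ∑ i ∈ S, a i = σ) ∧
    ((¬ ∃ S : Finset (Fin m), ∑ i ∈ S, a i = σ) →
      4 * (σ : ℝ) < sInf {c : ℝ | ∃ C, feasible C ∧ cost C = c}) := by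
  intro μ feasible cost sStar
  -- not `rfl`: the elaborator does not unfold the two `match` auxiliaries against each other
  have hμ : μ = cacheWeight a σ := by funext v; cases v <;> rfl
  have hfeasible : feasible = IsFeasibleTrace a σ := by simp only [feasible, hμ]; rfl
  have hcost : cost = loadingCost a σ := by simp only [cost, hμ]; rfl
  have hsStar : sStar = maxSubsetSumLE a σ := rfl
  have hle : (maxSubsetSumLE a σ : ℝ) ≤ σ := by exact_mod_cast maxSubsetSumLE_le a σ
  rw [hfeasible, hcost, hsStar, (isLeast_loadingCost hsum).csInf_eq,
    ← maxSubsetSumLE_eq_self_iff]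
  refine ⟨rfl, ⟨fun h => ?_, fun h => ?_⟩, fun hne => ?_⟩
  · exact_mod_cast (by linarith : (maxSubsetSumLE a σ : ℝ) = σ)
  · rw [h]; ring
  · have hlt : (maxSubsetSumLE a σ : ℝ) < σ := hle.lt_of_ne (by exact_mod_cast hne)
    linarith
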